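/- Let m ≥ 1, let U ⊆ ℝ^m be a disjoint union of finitely many standard balls, and let A be a finite set. Let P_{<U} be the poset, ordered by inclusion, of open proper subsets U₀ ⊊ U that are disjoint unions of finitely many standard balls. Then the canonical map colim_{U₀ ∈ P_{<U}} sEmb(A × D^m, U₀) → sEmb(A × D^m, U), taken in the category of sets, is injective, and its image is exactly the set of standard embeddings of A × D^m into U whose image is not all of U (the non-surjective standard embeddings). -/

import Mathlib

/-!
STATEMENT 16: Let U ⊆ ℝ^m be a disjoint union of finitely many standard balls and A a
finite set. The canonical map `colim_{U₀ ∈ P_{<U}} sEmb(A × D^m, U₀) → sEmb(A × D^m, U)`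
(colimit over the poset of proper open subsets of U that are disjoint unions of finitely
many standard balls) is injective, with image exactly the non-surjective standard
embeddings of A × D^m into U.
-/

open CategoryTheory CategoryTheory.Limits

noncomputable section

abbrev Euc (m : ℕ) := EuclideanSpace ℝ (Fin m)

def aff {m : ℕ} (p : ℝ × Euc m) (x : Euc m) : Euc m := p.1 • x + p.2

def unitBall (m : ℕ) : Set (Euc m) := Metric.ball 0 1

def realizeBalls {m : ℕ} {A : Type} (u : A → ℝ × Euc m) :
    (A × (unitBall m)) → Euc m :=
  fun ax => aff (u ax.1) ax.2.1

def IsStdEmbBalls {m : ℕ} {A : Type} (X : Set (Euc m)) (u : A → ℝ × Euc m) : Prop :=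
  (∀ a, 0 < (u a).1) ∧ Function.Injective (realizeBalls u) ∧
    Set.range (realizeBalls u) ⊆ X

/-- `U` is a disjoint union of finitely many standard balls. -/
def IsFinBallUnion {m : ℕ} (U : Set (Euc m)) : Prop :=
  ∃ (ι : Type) (_ : Fintype ι) (p : ι → ℝ × Euc m), (∀ i, 0 < (p i).1) ∧
    (∀ i i', i ≠ i' →
      Disjoint (Metric.ball (p i).2 (p i).1) (Metric.ball (p i').2 (p i').1)) ∧
    U = ⋃ i, Metric.ball (p i).2 (p i).1

/-- The poset of proper open subsets `U₀ ⊊ U` that are disjoint unions of finitely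
many standard balls, ordered by inclusion. -/
def ProperBallUnionPoset (m : ℕ) (U : Set (Euc m)) : Type :=
  {U₀ : Set (Euc m) // IsFinBallUnion U₀ ∧ U₀ ⊂ U}

instance (m : ℕ) (U : Set (Euc m)) : PartialOrder (ProperBallUnionPoset m U) :=
  inferInstanceAs (PartialOrder {U₀ : Set (Euc m) // IsFinBallUnion U₀ ∧ U₀ ⊂ U})

instance (m : ℕ) (U : Set (Euc m)) : Category (ProperBallUnionPoset m U) :=
  Preorder.smallCategory _

/-- The functor `U₀ ↦ sEmb(A × D^m, U₀)`. -/
def embDiagramLt (m : ℕ) (U : Set (Euc m)) (A : Type) [Fintype A] :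
    ProperBallUnionPoset m U ⥤ Type where
  obj U₀ := {u : A → ℝ × Euc m // IsStdEmbBalls U₀.1 u}
  map {U₀ V₀} h := TypeCat.ofHom fun u => ⟨u.1, by
    obtain ⟨h1, h2, h3⟩ := u.2
    exact ⟨h1, h2, h3.trans (leOfHom h)⟩⟩
  map_id := by intros; rfl
  map_comp := by intros; rfl

/-- The canonical cocone with apex `sEmb(A × D^m, U)`. -/
def embCoconeLt (m : ℕ) (U : Set (Euc m)) (A : Type) [Fintype A] :
    Cocone (embDiagramLt m U A) where
  pt := {u : A → ℝ × Euc m // IsStdEmbBalls U u}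
  ι :=
    { app := fun U₀ => TypeCat.ofHom fun u => ⟨u.1, by
        obtain ⟨h1, h2, h3⟩ := u.2
        exact ⟨h1, h2, h3.trans U₀.2.2.subset⟩⟩
      naturality := by intros; rfl }

lemma aff_mem_ball {m : ℕ} {c : ℝ} (hc : 0 < c) (v x : Euc m) :
    c • x + v ∈ Metric.ball v c ↔ x ∈ unitBall m := by
  simp only [unitBall, Metric.mem_ball, dist_eq_norm, add_sub_cancel_right, sub_zero,
    norm_smul, Real.norm_eq_abs, abs_of_pos hc]
  exact mul_lt_iff_lt_one_right hc

lemma exists_preimage {m : ℕ} {A : Type} (u : A → ℝ × Euc m) (hu : ∀ a, 0 < (u a).1)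
    {a : A} {z : Euc m} (hz : z ∈ Metric.ball (u a).2 (u a).1) :
    ∃ y : unitBall m, realizeBalls u (a, y) = z := by
  have hc := (hu a).ne'
  have hx' : (u a).1 • (((u a).1)⁻¹ • (z - (u a).2)) + (u a).2 = z := by
    rw [smul_inv_smul₀ hc]; abel
  have hmem : ((u a).1)⁻¹ • (z - (u a).2) ∈ unitBall m := by
    rw [← aff_mem_ball (hu a) (u a).2, hx']; exact hz
  exact ⟨⟨_, hmem⟩, hx'⟩

lemma range_realize {m : ℕ} {A : Type} (u : A → ℝ × Euc m) (hu : ∀ a, 0 < (u a).1) :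
    Set.range (realizeBalls u) = ⋃ a, Metric.ball (u a).2 (u a).1 := by
  ext x
  simp only [Set.mem_range, Set.mem_iUnion]
  constructor
  · rintro ⟨⟨a, y, hy⟩, rfl⟩
    exact ⟨a, (aff_mem_ball (hu a) _ _).2 hy⟩
  · rintro ⟨a, hx⟩
    obtain ⟨y, hy⟩ := exists_preimage u hu hx
    exact ⟨(a, y), hy⟩

lemma finBallUnion_range {m : ℕ} {A : Type} [Fintype A] (u : A → ℝ × Euc m)
    (h1 : ∀ a, 0 < (u a).1) (h2 : Function.Injective (realizeBalls u)) :
    IsFinBallUnion (Set.range (realizeBalls u)) := by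
  refine ⟨A, inferInstance, u, h1, ?_, range_realize u h1⟩
  intro a a' haa'
  rw [Set.disjoint_left]
  intro z hz hz'
  obtain ⟨y, hy⟩ := exists_preimage u h1 hz
  obtain ⟨y', hy'⟩ := exists_preimage u h1 hz'
  exact haa' (congrArg Prod.fst (h2 (hy.trans hy'.symm)))
/-!
A standard embedding `u` of `A × D^m` into `U` that is not surjective has as image a proper
subset of `U` which is itself a disjoint union of finitely many standard balls (disjoint because
`u` is injective), so `u` already lives at the object `range u` of the indexing poset. This object
lies below every `U₀` through which `u` factors, which makes any two representatives of `u` in the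
colimit equal; and `range u ⊆ U₀ ⊊ U` whenever `u` factors through some `U₀`.
-/

section Balls

variable {m : ℕ} {A : Type}

lemma aff_mem_ball_iff {c : ℝ} (hc : 0 < c) (v x : Euc m) :
    aff (c, v) x ∈ Metric.ball v c ↔ x ∈ unitBall m := by
  simp only [aff, unitBall, Metric.mem_ball, dist_eq_norm, add_sub_cancel_right, sub_zero,
    norm_smul, Real.norm_eq_abs, abs_of_pos hc]
  exact mul_lt_iff_lt_one_right hc

lemma exists_realizeBalls_eq {u : A → ℝ × Euc m} (hu : ∀ a, 0 < (u a).1) {a : A} {z : Euc m}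
    (hz : z ∈ Metric.ball (u a).2 (u a).1) : ∃ y : unitBall m, realizeBalls u (a, y) = z := by
  have hz' : aff (u a) ((u a).1⁻¹ • (z - (u a).2)) = z := by
    rw [aff, smul_inv_smul₀ (hu a).ne', sub_add_cancel]
  refine ⟨⟨_, (aff_mem_ball_iff (hu a) (u a).2 _).1 ?_⟩, hz'⟩
  rwa [Prod.mk.eta, hz']

lemma range_realizeBalls {u : A → ℝ × Euc m} (hu : ∀ a, 0 < (u a).1) :
    Set.range (realizeBalls u) = ⋃ a, Metric.ball (u a).2 (u a).1 := by
  ext z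
  simp only [Set.mem_range, Set.mem_iUnion]
  constructor
  · rintro ⟨⟨a, y, hy⟩, rfl⟩
    exact ⟨a, (aff_mem_ball_iff (hu a) _ _).2 hy⟩
  · rintro ⟨a, hz⟩
    obtain ⟨y, hy⟩ := exists_realizeBalls_eq hu hz
    exact ⟨(a, y), hy⟩

lemma isFinBallUnion_range_realizeBalls [Fintype A] {u : A → ℝ × Euc m}
    (hu : ∀ a, 0 < (u a).1) (hinj : Function.Injective (realizeBalls u)) :
    IsFinBallUnion (Set.range (realizeBalls u)) := by
  refine ⟨A, inferInstance, u, hu, fun a a' hne => Set.disjoint_left.2 ?_, range_realizeBalls hu⟩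
  intro z hz hz'
  obtain ⟨y, hy⟩ := exists_realizeBalls_eq hu hz
  obtain ⟨y', hy'⟩ := exists_realizeBalls_eq hu hz'
  exact hne (congrArg Prod.fst (hinj (hy.trans hy'.symm)))

end Balls

section Colimit

variable {m : ℕ} {U : Set (Euc m)} {A : Type} [Fintype A]

def ProperBallUnionPoset.ofRange (u : A → ℝ × Euc m) (hu : ∀ a, 0 < (u a).1)
    (hinj : Function.Injective (realizeBalls u)) (hU : Set.range (realizeBalls u) ⊂ U) :
    ProperBallUnionPoset m U :=
  ⟨Set.range (realizeBalls u), isFinBallUnion_range_realizeBalls hu hinj, hU⟩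

lemma range_realizeBalls_ssubset {U₀ : ProperBallUnionPoset m U}
    (a : (embDiagramLt m U A).obj U₀) : Set.range (realizeBalls a.1) ⊂ U :=
  a.2.2.2.trans_ssubset U₀.2.2

lemma colimit_ι_eq_ι_ofRange {U₀ : ProperBallUnionPoset m U} (a : (embDiagramLt m U A).obj U₀) :
    colimit.ι (embDiagramLt m U A) U₀ a =
      colimit.ι (embDiagramLt m U A)
        (.ofRange a.1 a.2.1 a.2.2.1 (range_realizeBalls_ssubset a))
        ⟨a.1, a.2.1, a.2.2.1, subset_rfl⟩ := by
  symm
  exact Types.colimit_sound (homOfLE (show ProperBallUnionPoset.ofRange .. ≤ U₀ from a.2.2.2)) rfl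

lemma colimit_ι_eq_of_val_eq {U₀ V₀ : ProperBallUnionPoset m U}
    {a : (embDiagramLt m U A).obj U₀} {b : (embDiagramLt m U A).obj V₀} (hab : a.1 = b.1) :
    colimit.ι (embDiagramLt m U A) U₀ a = colimit.ι (embDiagramLt m U A) V₀ b := by
  obtain ⟨a, ha⟩ := a
  obtain ⟨b, hb⟩ := b
  subst hab
  exact (colimit_ι_eq_ι_ofRange _).trans (colimit_ι_eq_ι_ofRange (U₀ := V₀) ⟨a, hb⟩).symm

end Colimit

theorem stmt_16_general (m : ℕ) (U : Set (Euc m))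
    (A : Type) [Fintype A] :
    Function.Injective (colimit.desc (embDiagramLt m U A) (embCoconeLt m U A)) ∧
    Set.range (colimit.desc (embDiagramLt m U A) (embCoconeLt m U A)) =
      {u : {u : A → ℝ × Euc m // IsStdEmbBalls U u} |
        Set.range (realizeBalls u.1) ≠ U} := by
  refine ⟨fun x y hxy => ?_, Set.ext fun u => ⟨?_, fun hu => ?_⟩⟩
  · obtain ⟨U₀, a, rfl⟩ := Types.jointly_surjective' x
    obtain ⟨V₀, b, rfl⟩ := Types.jointly_surjective' y
    simp only [colimit.ι_desc_apply] at hxy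
    exact colimit_ι_eq_of_val_eq (congrArg Subtype.val hxy)
  · rintro ⟨x, rfl⟩
    obtain ⟨U₀, a, rfl⟩ := Types.jointly_surjective' x
    rw [colimit.ι_desc_apply]
    exact (range_realizeBalls_ssubset a).ne
  · refine ⟨colimit.ι (embDiagramLt m U A) (.ofRange u.1 u.2.1 u.2.2.1 (u.2.2.2.ssubset_of_ne hu))
      ⟨u.1, u.2.1, u.2.2.1, subset_rfl⟩, ?_⟩
    exact colimit.ι_desc_apply ..

theorem stmt_16 (m : ℕ) (hm : 1 ≤ m) (U : Set (Euc m)) (hU : IsFinBallUnion U)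
    (A : Type) [Fintype A] :
    Function.Injective (colimit.desc (embDiagramLt m U A) (embCoconeLt m U A)) ∧
    Set.range (colimit.desc (embDiagramLt m U A) (embCoconeLt m U A)) =
      {u : {u : A → ℝ × Euc m // IsStdEmbBalls U u} |
        Set.range (realizeBalls u.1) ≠ U} :=
  stmt_16_general m U A
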